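/- arXiv:1110.5669 — 4 statements merged into one kernel-verified Lean document; each statement's English description precedes it below -/
import Mathlib

section
/- Let k ≥ 7 and ℓ ≥ 10^7·k^6 be integers such that k is the minimal integer greater than 2 that does not divide ℓ. Let H be an oriented graph which contains a directed path of length at most 64k from any vertex to any other vertex. If H contains a closed walk W with a edges going forward and b edges going backward, for some a ≠ b with a + b = |V(W)| < k, then H contains a closed directed walk of length ℓ. -/
/-- Out-degree of `v` in the digraph with edge relation `E`. -/
noncomputable def OutDeg {V : Type} (E : V → V → Prop) (v : V) : ℕ := {w | E v w}.ncard

/-- In-degree of `v` in the digraph with edge relation `E`. -/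
noncomputable def InDeg {V : Type} (E : V → V → Prop) (v : V) : ℕ := {w | E w v}.ncard

/-- `E` is an oriented graph: no loops and no pair of vertices joined in both directions. -/
def IsOriented {V : Type} (E : V → V → Prop) : Prop :=
  (∀ v, ¬ E v v) ∧ ∀ u v, E u v → ¬ E v u

/-- There is a closed directed walk of length `l`. -/
def HasClosedDirWalk {V : Type} (E : V → V → Prop) (l : ℕ) : Prop :=
  ∃ f : ℕ → V, f l = f 0 ∧ ∀ i < l, E (f i) (f (i + 1))

/-- There is a directed cycle of length `s` (a closed directed walk with distinct vertices). -/
def HasDirCycle {V : Type} (E : V → V → Prop) (s : ℕ) : Prop :=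
  3 ≤ s ∧ ∃ f : ℕ → V, f s = f 0 ∧ (∀ i < s, E (f i) (f (i + 1))) ∧
    Set.InjOn f (Set.Iio s)

/-- There is a directed path of length `m` from `x` to `y`. -/
def HasDirPath {V : Type} (E : V → V → Prop) (x y : V) (m : ℕ) : Prop :=
  ∃ f : ℕ → V, f 0 = x ∧ f m = y ∧ (∀ i < m, E (f i) (f (i + 1))) ∧
    Set.InjOn f (Set.Iic m)

/-- There is a closed walk (in the underlying graph) of length `a + b` with exactly `a`
edges oriented in the direction of traversal and exactly `b` against it. -/
def HasMixedClosedWalk {V : Type} (E : V → V → Prop) (a b : ℕ) : Prop :=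
  ∃ f : ℕ → V, f (a + b) = f 0 ∧
    (∀ i < a + b, E (f i) (f (i + 1)) ∨ E (f (i + 1)) (f i)) ∧
    {i : ℕ | i < a + b ∧ E (f i) (f (i + 1))}.ncard = a ∧
    {i : ℕ | i < a + b ∧ E (f (i + 1)) (f i)}.ncard = b

/-!
Replace every backward edge `y → x` of `W`, traversed from `x` to `y`, by a directed path
`P` from `x` to `y` of length `m ≤ 64k`. Doing this once gives a closed directed walk of length
`a + M`, where `M` is the total length of the paths; replacing the edge by `P`, the edge back,
and `P` again gives one of length `a + b + 2M`. Two closed walks through the same vertex of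
lengths `p = 2(a + M)` and `q = a + b + 2M` differ by `|a - b| ∈ (0, k)`, so `gcd p q < k`
divides `ℓ` by the minimality of `k`, and `ℓ ≥ pq` is then a nonnegative combination of `p`
and `q` (Sylvester–Frobenius).
-/

open Finset

def HasDirWalk {V : Type} (E : V → V → Prop) (x y : V) (m : ℕ) : Prop :=
  ∃ f : ℕ → V, f 0 = x ∧ f m = y ∧ ∀ i < m, E (f i) (f (i + 1))

section Walks

variable {V : Type} {E : V → V → Prop}

namespace HasDirWalk

theorem refl (x : V) : HasDirWalk E x x 0 :=
  ⟨fun _ => x, rfl, rfl, by omega⟩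

theorem of_adj {x y : V} (h : E x y) : HasDirWalk E x y 1 :=
  ⟨fun i => if i = 0 then x else y, rfl, rfl, fun i hi => by simpa [Nat.lt_one_iff.mp hi] using h⟩

theorem trans {x y z : V} {p q : ℕ} (h₁ : HasDirWalk E x y p) (h₂ : HasDirWalk E y z q) :
    HasDirWalk E x z (p + q) := by
  obtain ⟨f, hf0, hfp, hf⟩ := h₁
  obtain ⟨g, hg0, hgq, hg⟩ := h₂
  set h : ℕ → V := fun i => if i ≤ p then f i else g (i - p)
  have h_of_le : ∀ j ≤ p, h j = f j := fun j hj => if_pos hj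
  have h_of_ge : ∀ j, p ≤ j → h j = g (j - p) := by
    intro j hj
    rcases hj.eq_or_lt with rfl | hlt
    · simp [h, hfp, hg0]
    · exact if_neg (by omega)
  refine ⟨h, by simp [h_of_le 0 (Nat.zero_le p), hf0], by simp [h_of_ge (p + q), hgq], ?_⟩
  intro i hi
  by_cases hip : i < p
  · rw [h_of_le i hip.le, h_of_le (i + 1) hip]
    exact hf i hip
  · rw [h_of_ge i (by omega), h_of_ge (i + 1) (by omega), Nat.sub_add_comm (by omega)]
    exact hg (i - p) (by omega)

theorem mul_length {x : V} {p : ℕ} (h : HasDirWalk E x x p) (t : ℕ) :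
    HasDirWalk E x x (t * p) := by
  induction t with
  | zero => simpa using refl x
  | succ t ih => simpa [Nat.succ_mul] using ih.trans h

theorem hasClosedDirWalk {x : V} {l : ℕ} (h : HasDirWalk E x x l) : HasClosedDirWalk E l := by
  obtain ⟨f, hf0, hfl, hf⟩ := h
  exact ⟨f, hfl.trans hf0.symm, hf⟩

theorem hasClosedDirWalk_of_gcd_dvd {x : V} {p q l : ℕ} (hp : HasDirWalk E x x p)
    (hq : HasDirWalk E x x q) (hg : p.gcd q ∣ l) (hl : p.pred * q.pred ≤ l) :
    HasClosedDirWalk E l := by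
  obtain ⟨α, β, rfl⟩ := Nat.exists_add_mul_eq_of_gcd_dvd_of_mul_pred_le p q l hg hl
  exact ((hp.mul_length α).trans (hq.mul_length β)).hasClosedDirWalk

end HasDirWalk

theorem HasDirPath.hasDirWalk {x y : V} {m : ℕ} (h : HasDirPath E x y m) :
    HasDirWalk E x y m := by
  obtain ⟨f, hf0, hfm, hf, -⟩ := h
  exact ⟨f, hf0, hfm, hf⟩

theorem hasDirWalk_sum (ψ : ℕ → V) (c : ℕ → ℕ) (n : ℕ)
    (h : ∀ i < n, HasDirWalk E (ψ i) (ψ (i + 1)) (c i)) :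
    HasDirWalk E (ψ 0) (ψ n) (∑ i ∈ range n, c i) := by
  induction n with
  | zero => simpa using HasDirWalk.refl (ψ 0)
  | succ n ih =>
    rw [sum_range_succ]
    exact (ih fun i hi => h i (by omega)).trans (h n (by omega))

theorem exists_dirWalks_of_adj {L : ℕ} (hpath : ∀ x y : V, x ≠ y → ∃ m ≤ L, HasDirPath E x y m)
    {x y : V} (h : E y x) :
    ∃ m ≤ L, HasDirWalk E x y m ∧ HasDirWalk E x y (2 * m + 1) := by
  by_cases hxy : x = y
  · subst hxy
    exact ⟨0, Nat.zero_le L, .refl x, .of_adj h⟩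
  · obtain ⟨m, hmL, hP⟩ := hpath x y hxy
    have hP := hP.hasDirWalk
    have hdetour := (hP.trans (.of_adj h)).trans hP
    exact ⟨m, hmL, hP, by rwa [show m + 1 + m = 2 * m + 1 by omega] at hdetour⟩

theorem hasDirWalk_of_backward_detours [DecidableRel E] {ψ : ℕ → V} {n : ℕ}
    (hor : ∀ i < n, E (ψ i) (ψ (i + 1)) ∨ E (ψ (i + 1)) (ψ i)) (c : ℕ → ℕ)
    (hc : ∀ i < n, E (ψ (i + 1)) (ψ i) → HasDirWalk E (ψ i) (ψ (i + 1)) (c i)) :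
    HasDirWalk E (ψ 0) (ψ n)
      (∑ i ∈ range n with E (ψ (i + 1)) (ψ i), c i +
        #{i ∈ range n | ¬ E (ψ (i + 1)) (ψ i)}) := by
  have hwalk := hasDirWalk_sum ψ (fun i => if E (ψ (i + 1)) (ψ i) then c i else 1) n
    fun i hi => by
      split_ifs with hb
      · exact hc i hi hb
      · exact .of_adj ((hor i hi).resolve_right hb)
  simpa [sum_ite] using hwalk

theorem exists_closedDirWalks_of_mixed {L : ℕ}
    (hpath : ∀ x y : V, x ≠ y → ∃ m ≤ L, HasDirPath E x y m) {ψ : ℕ → V} {a b : ℕ}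
    (hψ : ψ (a + b) = ψ 0)
    (hor : ∀ i < a + b, E (ψ i) (ψ (i + 1)) ∨ E (ψ (i + 1)) (ψ i))
    (hb : {i : ℕ | i < a + b ∧ E (ψ (i + 1)) (ψ i)}.ncard = b) :
    ∃ M ≤ b * L, HasDirWalk E (ψ 0) (ψ 0) (a + M) ∧
      HasDirWalk E (ψ 0) (ψ 0) (a + b + 2 * M) := by
  classical
  set B := {i ∈ range (a + b) | E (ψ (i + 1)) (ψ i)}
  have hB : #B = b := by
    rw [← hb, ← Set.ncard_coe_finset]
    congr
    ext i
    simp [B]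
  have hF : #{i ∈ range (a + b) | ¬ E (ψ (i + 1)) (ψ i)} = a := by
    have := card_filter_add_card_filter_not (s := range (a + b))
      (fun i => E (ψ (i + 1)) (ψ i))
    rw [card_range] at this
    change #B + _ = _ at this
    omega
  have hstep : ∀ i, ∃ m, E (ψ (i + 1)) (ψ i) → m ≤ L ∧
      HasDirWalk E (ψ i) (ψ (i + 1)) m ∧ HasDirWalk E (ψ i) (ψ (i + 1)) (2 * m + 1) := by
    intro i
    by_cases hi : E (ψ (i + 1)) (ψ i)
    · obtain ⟨m, hm⟩ := exists_dirWalks_of_adj hpath hi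
      exact ⟨m, fun _ => hm⟩
    · exact ⟨0, fun h => absurd h hi⟩
  choose m hm using hstep
  have hM : ∑ i ∈ B, m i ≤ b * L := by
    rw [← hB, ← smul_eq_mul]
    exact sum_le_card_nsmul _ _ _ fun i hi => (hm i (mem_filter.mp hi).2).1
  have h₁ := hasDirWalk_of_backward_detours hor m fun i _ h => (hm i h).2.1
  have h₂ := hasDirWalk_of_backward_detours hor (fun i => 2 * m i + 1) fun i _ h => (hm i h).2.2
  rw [hψ, hF] at h₁ h₂
  rw [sum_add_distrib, ← mul_sum, sum_const, hB, smul_eq_mul, mul_one] at h₂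
  refine ⟨∑ i ∈ B, m i, hM, ?_, ?_⟩
  · rwa [add_comm]
  · rwa [show 2 * ∑ i ∈ B, m i + b + a = a + b + 2 * ∑ i ∈ B, m i by ring] at h₂

end Walks

theorem dvd_of_pos_of_lt {k l g : ℕ} (hk : 4 < k) (hmin : ∀ m : ℕ, 2 < m → m < k → m ∣ l)
    (hg : 0 < g) (hgk : g < k) : g ∣ l := by
  by_cases h2 : 2 < g
  · exact hmin g h2 hgk
  · have h4 : g ∣ 4 := by interval_cases g <;> norm_num
    exact h4.trans (hmin 4 (by norm_num) hk)

theorem gcd_dvd_of_lt_add {k l p q : ℕ} (hk : 4 < k)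
    (hmin : ∀ m : ℕ, 2 < m → m < k → m ∣ l) (hpq : p ≠ q) (hp : p < q + k) (hq : q < p + k) :
    p.gcd q ∣ l := by
  wlog hlt : p < q generalizing p q
  · rw [Nat.gcd_comm]
    exact this hpq.symm hq hp (by omega)
  have hdvd : p.gcd q ∣ q - p := Nat.dvd_sub (Nat.gcd_dvd_right p q) (Nat.gcd_dvd_left p q)
  have hle := Nat.le_of_dvd (by omega) hdvd
  exact dvd_of_pos_of_lt hk hmin (Nat.gcd_pos_of_pos_right p (by omega)) (by omega)

theorem stmt_8_general (k l : ℕ) (hk : 7 ≤ k) (hl : 10 ^ 7 * k ^ 6 ≤ l)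
    (hmin : ∀ m : ℕ, 2 < m → m < k → m ∣ l)
    (V : Type) (E : V → V → Prop)
    (hpath : ∀ x y : V, x ≠ y → ∃ m ≤ 64 * k, HasDirPath E x y m)
    (a b : ℕ) (hab : a ≠ b) (habk : a + b < k)
    (hW : ∃ f : ℕ → V, f (a + b) = f 0 ∧ Set.InjOn f (Set.Iio (a + b)) ∧
      (∀ i < a + b, E (f i) (f (i + 1)) ∨ E (f (i + 1)) (f i)) ∧
      {i : ℕ | i < a + b ∧ E (f i) (f (i + 1))}.ncard = a ∧
      {i : ℕ | i < a + b ∧ E (f (i + 1)) (f i)}.ncard = b) :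
    HasClosedDirWalk E l := by
  obtain ⟨ψ, hψ, -, hor, -, hb⟩ := hW
  obtain ⟨M, hM, h₁, h₂⟩ := exists_closedDirWalks_of_mixed hpath hψ hor hb
  have hg := gcd_dvd_of_lt_add (p := a + M + (a + M)) (q := a + b + 2 * M) (by omega) hmin
    (by omega) (by omega) (by omega)
  refine (h₁.trans h₁).hasClosedDirWalk_of_gcd_dvd h₂ hg ?_
  have hMk : M ≤ 64 * k ^ 2 := hM.trans (by nlinarith)
  calc (a + M + (a + M)).pred * (a + b + 2 * M).pred
      ≤ (130 * k ^ 2) * (130 * k ^ 2) := by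
        gcongr <;> exact (Nat.pred_le _).trans (by nlinarith)
    _ ≤ 10 ^ 7 * k ^ 6 := by nlinarith [pow_le_pow_left₀ (Nat.zero_le 1) (by omega : 1 ≤ k) 2]
    _ ≤ l := hl

/-- Lemma 2.6: with `k, ℓ` as in (*), let `H` be an oriented graph containing a directed path
of length at most `64k` from any vertex to any other vertex. If `H` contains a closed walk `W`
on `a + b = |V(W)|` distinct vertices with `a` edges going forwards and `b` edges going
backwards, for some `a ≠ b` with `a + b < k`, then `H` contains a closed directed walk of
length `ℓ`. -/
theorem stmt_8 (k l : ℕ) (hk : 7 ≤ k) (hl : 10 ^ 7 * k ^ 6 ≤ l)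
    (hknd : ¬ k ∣ l) (hmin : ∀ m : ℕ, 2 < m → m < k → m ∣ l)
    (V : Type) (E : V → V → Prop) (hE : IsOriented E)
    (hpath : ∀ x y : V, x ≠ y → ∃ m ≤ 64 * k, HasDirPath E x y m)
    (a b : ℕ) (hab : a ≠ b) (habk : a + b < k)
    (hW : ∃ f : ℕ → V, f (a + b) = f 0 ∧ Set.InjOn f (Set.Iio (a + b)) ∧
      (∀ i < a + b, E (f i) (f (i + 1)) ∨ E (f (i + 1)) (f i)) ∧
      {i : ℕ | i < a + b ∧ E (f i) (f (i + 1))}.ncard = a ∧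
      {i : ℕ | i < a + b ∧ E (f (i + 1)) (f i)}.ncard = b) :
    HasClosedDirWalk E l :=
  stmt_8_general k l hk hl hmin V E hpath a b hab habk hW
end

section
/- Let k ≥ 4 be an integer. Every undirected graph on n vertices which contains no odd cycle of length less than k and has minimum degree δ > 2n/k is bipartite. -/
/-!
A shortest odd closed walk `w` is a cycle, so its length `ℓ` is at least `k ≥ 4`. No vertex `y`
is adjacent to three positions of `w`: the three arcs between them have total length `ℓ`, which is
odd, so one arc is odd and (as `ℓ ≥ 4`) of length at most `ℓ - 3`; closing it up through `y`
gives a shorter odd closed walk. Counting pairs (position on `w`, neighbour of it) then gives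
`ℓ · 2n/k < ∑ deg ≤ 2n`, contradicting `ℓ ≥ k`. So every closed walk is even and `G` is
bipartite.
-/

open Finset

namespace SimpleGraph

variable {V : Type*} {G : SimpleGraph V}

namespace Walk

lemma exists_closed_walk_of_not_isPath {u v : V} (p : G.Walk u v) (hp : ¬ p.IsPath) :
    ∃ (x : V) (c : G.Walk x x) (d : G.Walk u v),
      0 < c.length ∧ c.length + d.length = p.length := by
  classical
  induction p with
  | nil => exact absurd IsPath.nil hp
  | @cons u _ _ h p ih =>
    by_cases hpath : p.IsPath
    · have hu : u ∈ p.support := by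
        simpa only [cons_isPath_iff, hpath, true_and, not_not] using hp
      refine ⟨u, cons h (p.takeUntil u hu), p.dropUntil u hu, by simp, ?_⟩
      have := congrArg length (p.take_spec hu)
      simp only [length_append] at this
      simp only [length_cons, ← this]; omega
    · obtain ⟨x, c, d, hc, hcd⟩ := ih hpath
      exact ⟨x, c, cons h d, hc, by rw [length_cons, length_cons]; omega⟩

lemma isCycle_of_minimal_odd {u : V} {w : G.Walk u u} (hw : Odd w.length)
    (hmin : ∀ (x : V) (c : G.Walk x x), Odd c.length → w.length ≤ c.length) : w.IsCycle := by
  cases w with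
  | nil => simp at hw
  | cons h p =>
    simp only [isCycle_iff_isPath_tail_and_le_length, tail_cons, length_cons]
    rw [length_cons, Nat.odd_iff] at hw
    refine ⟨(isPath_copy _ _ _).mpr (by_contra fun hp => ?_), ?_⟩
    · obtain ⟨x, c, d, hc, hcd⟩ := exists_closed_walk_of_not_isPath p hp
      rcases Nat.even_or_odd c.length with hce | hco
      · rw [Nat.even_iff] at hce
        have := hmin u (cons h d) (by rw [length_cons, Nat.odd_iff]; omega)
        rw [length_cons, length_cons] at this; omega
      · have := hmin x c hco
        rw [length_cons] at this; omega
    · have hp : p.length ≠ 0 := fun h0 => by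
        cases p with
        | nil => exact G.irrefl h
        | cons => simp at h0
      omega

lemma exists_walk_getVert_getVert {u v : V} (p : G.Walk u v) {a b : ℕ} (hab : a ≤ b)
    (hb : b ≤ p.length) : ∃ q : G.Walk (p.getVert a) (p.getVert b), q.length = b - a :=
  ⟨((p.drop a).take (b - a)).copy rfl (by rw [drop_getVert, Nat.add_sub_cancel' hab]),
    by rw [length_copy, take_length, drop_length]; omega⟩

lemma exists_walk_getVert_getVert_around {u : V} (p : G.Walk u u) {a : ℕ} (ha : a ≤ p.length)
    (c : ℕ) : ∃ q : G.Walk (p.getVert c) (p.getVert a), q.length = p.length - c + a :=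
  ⟨(p.drop c).append (p.take a), by rw [length_append, drop_length, take_length]; omega⟩

lemma not_adj_getVert_of_lt_of_lt {u : V} {w : G.Walk u u} (hw : Odd w.length) (h4 : 4 ≤ w.length)
    (hmin : ∀ (x : V) (c : G.Walk x x), Odd c.length → w.length ≤ c.length)
    {y : V} {a b c : ℕ} (hab : a < b) (hbc : b < c) (hc : c < w.length)
    (ha : G.Adj y (w.getVert a)) (hb : G.Adj y (w.getVert b)) : ¬ G.Adj y (w.getVert c) := by
  intro hc'
  have hshortcut {s t : ℕ} (q : G.Walk (w.getVert s) (w.getVert t)) (hs : G.Adj y (w.getVert s))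
      (ht : G.Adj y (w.getVert t)) : q.length % 2 = 1 → w.length ≤ q.length + 2 := fun hq => by
    simpa using hmin y (cons hs (q.concat ht.symm))
      (by rw [length_cons, length_concat, Nat.odd_iff]; omega)
  obtain ⟨q₁, hq₁⟩ := exists_walk_getVert_getVert w hab.le (hbc.trans hc).le
  obtain ⟨q₂, hq₂⟩ := exists_walk_getVert_getVert w hbc.le hc.le
  obtain ⟨q₃, hq₃⟩ := exists_walk_getVert_getVert_around w (hab.trans hbc |>.trans hc).le c
  have h₁ := hq₁ ▸ hshortcut q₁ ha hb
  have h₂ := hq₂ ▸ hshortcut q₂ hb hc'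
  have h₃ := hq₃ ▸ hshortcut q₃ hc' ha
  rw [Nat.odd_iff] at hw
  omega

lemma card_filter_adj_getVert_le_two [DecidableRel G.Adj] {u : V} {w : G.Walk u u}
    (hw : Odd w.length) (h4 : 4 ≤ w.length)
    (hmin : ∀ (x : V) (c : G.Walk x x), Odd c.length → w.length ≤ c.length) (y : V) :
    #{i ∈ range w.length | G.Adj y (w.getVert i)} ≤ 2 := by
  by_contra! h3
  obtain ⟨t, hts, ht⟩ := exists_subset_card_eq (n := 3) h3
  have he (i : Fin 3) : t.orderEmbOfFin ht i < w.length ∧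
      G.Adj y (w.getVert (t.orderEmbOfFin ht i)) := by
    simpa using hts (t.orderEmbOfFin_mem ht i)
  exact not_adj_getVert_of_lt_of_lt hw h4 hmin ((t.orderEmbOfFin ht).strictMono (by decide))
    ((t.orderEmbOfFin ht).strictMono (by decide)) (he 2).1 (he 0).2 (he 1).2 (he 2).2

lemma sum_ncard_neighborSet_getVert_le [Fintype V] {u : V} {w : G.Walk u u}
    (hw : Odd w.length) (h4 : 4 ≤ w.length)
    (hmin : ∀ (x : V) (c : G.Walk x x), Odd c.length → w.length ≤ c.length) :
    ∑ i ∈ range w.length, (G.neighborSet (w.getVert i)).ncard ≤ 2 * Fintype.card V := by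
  classical
  calc ∑ i ∈ range w.length, (G.neighborSet (w.getVert i)).ncard
      = ∑ i ∈ range w.length, #(univ.bipartiteAbove (fun i y => G.Adj (w.getVert i) y) i) := by
        simp [bipartiteAbove, Set.ncard_eq_toFinset_card', neighborSet]
    _ = ∑ y, #{i ∈ range w.length | G.Adj y (w.getVert i)} := by
        rw [sum_card_bipartiteAbove_eq_sum_card_bipartiteBelow]
        simp [bipartiteBelow, G.adj_comm]
    _ ≤ ∑ _y : V, 2 := sum_le_sum fun y _ => card_filter_adj_getVert_le_two hw h4 hmin y
    _ = 2 * Fintype.card V := by simp [mul_comm]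

end Walk

lemma exists_minimal_odd_closed_walk (h : ∃ (u : V) (w : G.Walk u u), Odd w.length) :
    ∃ (u : V) (w : G.Walk u u), Odd w.length ∧
      ∀ (x : V) (c : G.Walk x x), Odd c.length → w.length ≤ c.length := by
  classical
  have hex : ∃ n, ∃ (u : V) (w : G.Walk u u), Odd w.length ∧ w.length = n :=
    let ⟨u, w, hw⟩ := h; ⟨_, u, w, hw, rfl⟩
  obtain ⟨u, w, hw, hlen⟩ := Nat.find_spec hex
  exact ⟨u, w, hw, fun x c hc => hlen ▸ Nat.find_min' hex ⟨x, c, hc, rfl⟩⟩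

lemma IsBipartiteWith.mem_iff_not_mem {s t : Set V} (h : G.IsBipartiteWith s t) {u v : V}
    (huv : G.Adj u v) : u ∈ s ↔ v ∉ s := by
  rcases h.mem_of_adj huv with ⟨hu, hv⟩ | ⟨hu, hv⟩
  · exact iff_of_true hu (h.disjoint.notMem_of_mem_right hv)
  · exact iff_of_false (h.disjoint.notMem_of_mem_right hu) (not_not.mpr hv)

end SimpleGraph

open SimpleGraph in
/-- Andrásfai–Erdős–Sós (Theorem 2.8): for `k ≥ 4`, every undirected graph on `n` vertices
containing no odd cycle of length less than `k` and with minimum degree `δ > 2n/k` is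
bipartite. -/
theorem stmt_10 (k : ℕ) (hk : 4 ≤ k) (V : Type) [Fintype V] (G : SimpleGraph V)
    (hodd : ∀ (v : V) (w : G.Walk v v), w.IsCycle → Odd w.length → k ≤ w.length)
    (hdeg : ∀ v : V, 2 * (Fintype.card V : ℝ) / (k : ℝ) < ((G.neighborSet v).ncard : ℝ)) :
    ∃ S : Set V, ∀ u v : V, G.Adj u v → (u ∈ S ↔ v ∉ S) := by
  suffices G.IsBipartite by
    obtain ⟨s, t, hst⟩ := this.exists_isBipartiteWith
    exact ⟨s, fun u v => hst.mem_iff_not_mem⟩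
  rw [IsBipartite, two_colorable_iff_forall_loop_even]
  by_contra! hodd_walk
  simp only [Nat.not_even_iff_odd] at hodd_walk
  obtain ⟨u, w, hw, hmin⟩ := exists_minimal_odd_closed_walk hodd_walk
  have hkw : k ≤ w.length := hodd u w (Walk.isCycle_of_minimal_odd hw hmin) hw
  have hsum := Walk.sum_ncard_neighborSet_getVert_le hw (hk.trans hkw) hmin
  have hlow : (w.length : ℝ) * (2 * Fintype.card V / k) <
      ∑ i ∈ range w.length, ((G.neighborSet (w.getVert i)).ncard : ℝ) := by
    simpa using sum_lt_sum_of_nonempty (nonempty_range_iff.mpr (by omega))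
      fun i _ => hdeg (w.getVert i)
  have hk0 : (k : ℝ) ≠ 0 := by positivity
  have hupp : (∑ i ∈ range w.length, (G.neighborSet (w.getVert i)).ncard : ℝ) ≤
      2 * Fintype.card V := by
    exact_mod_cast hsum
  have : (k : ℝ) * (2 * Fintype.card V / k) ≤ w.length * (2 * Fintype.card V / k) := by gcongr
  rw [mul_div_cancel₀ _ hk0] at this
  linarith
end

section
/- Let k be a natural number and let H be an oriented graph whose underlying undirected graph is bipartite, and suppose that for all natural numbers a ≠ b with a + b < k, H contains no closed walk of length a + b with a edges oriented forwards and b edges oriented backwards. Fix a vertex x of H, and for each i ≥ 1 let X_i be the set of vertices reachable from x by a directed walk of length exactly i, and let Y_i be the set of vertices from which x is reachable by a directed walk of length exactly i. Then for all i ≠ j with i, j ≤ ⌈k/2⌉ one has X_i ∩ X_j = ∅ and Y_i ∩ Y_j = ∅. -/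
/-- The set of vertices reachable from `x` by a directed walk of length exactly `i`. -/
def ForwardSet {V : Type} (E : V → V → Prop) (x : V) (i : ℕ) : Set V :=
  {v | ∃ f : ℕ → V, f 0 = x ∧ f i = v ∧ ∀ j < i, E (f j) (f (j + 1))}

/-- The set of vertices from which `x` is reachable by a directed walk of length exactly `i`. -/
def BackwardSet {V : Type} (E : V → V → Prop) (x : V) (i : ℕ) : Set V :=
  {v | ∃ f : ℕ → V, f 0 = v ∧ f i = x ∧ ∀ j < i, E (f j) (f (j + 1))}

/-!
Two directed walks of lengths `i ≠ j` with common endpoints (a point of `X_i ∩ X_j` or of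
`Y_i ∩ Y_j` provides such a pair) close up, running the second one backwards, into a closed
walk with `i` forward and `j` backward edges. Its length `i + j` is even by bipartiteness,
while `i ≠ j` and `i, j ≤ ⌈k/2⌉` give `i + j ≤ 2⌈k/2⌉ - 1 ≤ k` with equality only for odd `k`;
hence `i + j < k`.
-/

section MixedWalks

variable {V : Type} {E : V → V → Prop}

lemma mem_iff_mem_iff_even_of_walk {S : Set V} (hS : ∀ u v, E u v → (u ∈ S ↔ v ∉ S))
    {f : ℕ → V} {n : ℕ} (hf : ∀ t < n, E (f t) (f (t + 1)) ∨ E (f (t + 1)) (f t)) :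
    ∀ t ≤ n, ((f t ∈ S ↔ f 0 ∈ S) ↔ Even t) := by
  intro t
  induction t with
  | zero => simp
  | succ t ih =>
    intro ht
    have hflip : f (t + 1) ∈ S ↔ f t ∉ S := by
      rcases hf t (by omega) with h | h
      · have := hS _ _ h
        tauto
      · exact hS _ _ h
    rw [Nat.even_add_one, ← ih (by omega)]
    tauto

lemma HasMixedClosedWalk.even_add {S : Set V} (hS : ∀ u v, E u v → (u ∈ S ↔ v ∉ S))
    {a b : ℕ} (h : HasMixedClosedWalk E a b) : Even (a + b) := by
  obtain ⟨f, hclosed, hstep, -, -⟩ := h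
  exact (mem_iff_mem_iff_even_of_walk hS hstep (a + b) le_rfl).mp (by rw [hclosed])

lemma hasMixedClosedWalk_of_forward_backward (hasymm : ∀ u v, E u v → ¬ E v u) {a b : ℕ}
    {g : ℕ → V} (hclosed : g (a + b) = g 0) (hfwd : ∀ t < a, E (g t) (g (t + 1)))
    (hbwd : ∀ t, a ≤ t → t < a + b → E (g (t + 1)) (g t)) :
    HasMixedClosedWalk E a b := by
  have hfwd_iff : ∀ t < a + b, (E (g t) (g (t + 1)) ↔ t < a) := fun t ht =>
    ⟨fun h => by_contra fun hta => hasymm _ _ h (hbwd t (not_lt.mp hta) ht), hfwd t⟩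
  have hbwd_iff : ∀ t < a + b, (E (g (t + 1)) (g t) ↔ a ≤ t) := fun t ht =>
    ⟨fun h => by_contra fun hta => hasymm _ _ (hfwd t (not_le.mp hta)) h, (hbwd t · ht)⟩
  have hfwd_set : {t | t < a + b ∧ E (g t) (g (t + 1))} = Set.Iio a := by
    ext t
    simp only [Set.mem_ofPred_eq, Set.mem_Iio]
    exact ⟨fun ⟨ht, h⟩ => (hfwd_iff t ht).mp h, fun ht => ⟨by omega, hfwd t ht⟩⟩
  have hbwd_set : {t | t < a + b ∧ E (g (t + 1)) (g t)} = Set.Ico a (a + b) := by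
    ext t
    simp only [Set.mem_ofPred_eq, Set.mem_Ico]
    exact ⟨fun ⟨ht, h⟩ => ⟨(hbwd_iff t ht).mp h, ht⟩,
      fun ⟨hat, ht⟩ => ⟨ht, hbwd t hat ht⟩⟩
  refine ⟨g, hclosed, fun t ht => ?_, by simp [hfwd_set], by simp [hbwd_set]⟩
  rcases lt_or_ge t a with hta | hta
  · exact Or.inl (hfwd t hta)
  · exact Or.inr (hbwd t hta ht)

lemma hasMixedClosedWalk_of_dirWalks (hasymm : ∀ u v, E u v → ¬ E v u) {i j : ℕ}
    {P Q : ℕ → V} (hstart : P 0 = Q 0) (hend : P i = Q j)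
    (hP : ∀ t < i, E (P t) (P (t + 1))) (hQ : ∀ t < j, E (Q t) (Q (t + 1))) :
    HasMixedClosedWalk E i j := by
  set g : ℕ → V := fun t => if t ≤ i then P t else Q (i + j - t) with hg
  have hg_Q : ∀ t, i ≤ t → g t = Q (i + j - t) := by
    intro t hit
    rcases hit.eq_or_lt with rfl | hit
    · simp [hg, hend]
    · simp [hg, not_le.mpr hit]
  refine hasMixedClosedWalk_of_forward_backward (g := g) hasymm ?_ ?_ ?_
  · rw [hg_Q _ (by omega)]
    simp [hg, hstart]
  · intro t ht
    simpa [hg, ht.le, Nat.succ_le_of_lt ht] using hP t ht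
  · intro t hit ht
    rw [hg_Q t hit, hg_Q (t + 1) (by omega), show i + j - t = i + j - (t + 1) + 1 by omega]
    exact hQ _ (by omega)

end MixedWalks

/-- The Claim in the proof of Lemma 2.9: if the underlying graph of the oriented graph `H` is
bipartite and `H` has no closed walk with `a` forward and `b` backward edges for any `a ≠ b`
with `a + b < k`, then for all `i ≠ j` with `1 ≤ i, j ≤ ⌈k/2⌉ = (k+1)/2`, the sets `X_i, X_j`
are disjoint, and so are `Y_i, Y_j`. -/
theorem stmt_12 (k : ℕ) (V : Type) (E : V → V → Prop) (hE : IsOriented E)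
    (hbip : ∃ S : Set V, ∀ u v : V, E u v → (u ∈ S ↔ v ∉ S))
    (hnowalk : ∀ a b : ℕ, a ≠ b → a + b < k → ¬ HasMixedClosedWalk E a b)
    (x : V) :
    ∀ i j : ℕ, 1 ≤ i → 1 ≤ j → i ≠ j → i ≤ (k + 1) / 2 → j ≤ (k + 1) / 2 →
      ForwardSet E x i ∩ ForwardSet E x j = ∅ ∧
      BackwardSet E x i ∩ BackwardSet E x j = ∅ := by
  intro i j _ _ hij hik hjk
  obtain ⟨S, hS⟩ := hbip
  have hno : ¬ HasMixedClosedWalk E i j := fun h => by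
    obtain ⟨m, hm⟩ := h.even_add hS
    exact hnowalk i j hij (by omega) h
  constructor <;> refine Set.eq_empty_iff_forall_notMem.mpr ?_ <;>
    rintro v ⟨⟨P, hP0, hPi, hP⟩, ⟨Q, hQ0, hQj, hQ⟩⟩ <;>
    exact hno <| hasMixedClosedWalk_of_dirWalks hE.2 (hP0.trans hQ0.symm)
      (hPi.trans hQj.symm) hP hQ
end

section
/- Let ℓ > 4 be an even integer and let k > 2 be minimal such that k does not divide ℓ. Then there exists an oriented graph G on n = ⌊(k−1)/2⌋·(ℓ−2) + 1 vertices with minimum semidegree δ⁰(G) ≥ ⌊n/k⌋ + 1 that contains no directed cycle of length greater than ℓ − 1. -/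
section Homomorphisms

variable {V W : Type} {E : V → V → Prop} {R : W → W → Prop}

lemma IsOriented.of_hom (hR : IsOriented R) (φ : V → W) (hφ : ∀ u v, E u v → R (φ u) (φ v)) :
    IsOriented E :=
  ⟨fun v h => hR.1 (φ v) (hφ v v h), fun u v huv hvu => hR.2 _ _ (hφ u v huv) (hφ v u hvu)⟩

lemma outDeg_le_of_hom [Finite W] {φ : V → W} (hinj : φ.Injective)
    (hφ : ∀ u v, E u v → R (φ u) (φ v)) (v : V) : OutDeg E v ≤ OutDeg R (φ v) := by
  rw [OutDeg, ← Set.ncard_image_of_injective _ hinj]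
  exact Set.ncard_le_ncard (by rintro _ ⟨w, hw, rfl⟩; exact hφ v w hw)

lemma inDeg_le_of_hom [Finite W] {φ : V → W} (hinj : φ.Injective)
    (hφ : ∀ u v, E u v → R (φ u) (φ v)) (v : V) : InDeg E v ≤ InDeg R (φ v) :=
  outDeg_le_of_hom (E := flip E) (R := flip R) hinj (fun u v h => hφ v u h) v

lemma HasDirCycle.of_hom {s : ℕ} (h : HasDirCycle E s) {φ : V → W} (hinj : φ.Injective)
    (hφ : ∀ u v, E u v → R (φ u) (φ v)) : HasDirCycle R s := by
  obtain ⟨hs, f, hclosed, hedge, hf⟩ := h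
  exact ⟨hs, φ ∘ f, congrArg φ hclosed, fun i hi => hφ _ _ (hedge i hi), hinj.comp_injOn hf⟩

lemma outDeg_comap_equiv (e : V ≃ W) (v : V) :
    OutDeg (fun a b => R (e a) (e b)) v = OutDeg R (e v) :=
  Set.ncard_preimage_of_injective_subset_range e.injective
    (by rw [e.range_eq_univ]; exact Set.subset_univ _)

lemma inDeg_comap_equiv (e : V ≃ W) (v : V) :
    InDeg (fun a b => R (e a) (e b)) v = InDeg R (e v) :=
  outDeg_comap_equiv (R := flip R) e v

end Homomorphisms

lemma HasDirCycle.le_card {V : Type} [Fintype V] {E : V → V → Prop} {s : ℕ}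
    (h : HasDirCycle E s) : s ≤ Fintype.card V := by
  obtain ⟨-, f, -, -, hf⟩ := h
  simpa using Finset.card_le_card_of_injOn f (s := Finset.range s) (t := Finset.univ)
    (fun _ _ => Finset.mem_univ _) (by rwa [Finset.coe_range])

section CutVertex

variable {V β : Type*} {E : V → V → Prop} {h : V} {b : V → β}

lemma apply_eq_apply_of_walk_avoiding (hb : ∀ u v, E u v → u ≠ h → v ≠ h → b u = b v)
    {f : ℕ → V} {i j : ℕ} (hij : i ≤ j) (hedge : ∀ x, i ≤ x → x < j → E (f x) (f (x + 1)))
    (havoid : ∀ x, i ≤ x → x ≤ j → f x ≠ h) : b (f i) = b (f j) := by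
  induction j, hij using Nat.le_induction with
  | base => rfl
  | succ j hij ih =>
    rw [ih (fun x hx _ => hedge x hx (by omega)) (fun x hx _ => havoid x hx (by omega))]
    exact hb _ _ (hedge j hij (by omega)) (havoid j hij (by omega))
      (havoid (j + 1) (by omega) le_rfl)

/-- The cycle meets `h` at most once, so one of its two arcs between `f i` and `f j` avoids `h`. -/
lemma apply_eq_apply_of_cycle (hb : ∀ u v, E u v → u ≠ h → v ≠ h → b u = b v)
    {f : ℕ → V} {s : ℕ} (hclosed : f s = f 0) (hedge : ∀ i < s, E (f i) (f (i + 1)))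
    (hinj : Set.InjOn f (Set.Iio s)) {i j : ℕ} (hi : i < s) (hj : j < s)
    (hfi : f i ≠ h) (hfj : f j ≠ h) : b (f i) = b (f j) := by
  wlog hij : i ≤ j generalizing i j
  · exact (this hj hi hfj hfi (by omega)).symm
  by_cases hmid : ∃ x, i < x ∧ x < j ∧ f x = h
  · obtain ⟨x, hix, hxj, hfx⟩ := hmid
    have havoid : ∀ y < s, y ≠ x → f y ≠ h := fun y hy hyx hfy =>
      hyx (hinj (Set.mem_Iio.2 hy) (Set.mem_Iio.2 (by omega)) (hfy.trans hfx.symm))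
    calc b (f i) = b (f 0) :=
          (apply_eq_apply_of_walk_avoiding hb (Nat.zero_le i) (fun y _ hy => hedge y (by omega))
            (fun y _ hy => havoid y (by omega) (by omega))).symm
      _ = b (f s) := by rw [hclosed]
      _ = b (f j) := by
          refine (apply_eq_apply_of_walk_avoiding hb hj.le (fun y _ hy => hedge y hy) ?_).symm
          intro y hjy hys
          rcases hys.lt_or_eq with hys | rfl
          · exact havoid y hys (by omega)
          · rw [hclosed]; exact havoid 0 (by omega) (by omega)
  · push Not at hmid
    refine apply_eq_apply_of_walk_avoiding hb hij (fun y _ hy => hedge y (by omega)) ?_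
    intro y hiy hyj
    rcases hiy.lt_or_eq with hiy | rfl
    · rcases hyj.lt_or_eq with hyj | rfl
      · exact hmid y hiy hyj
      · exact hfj
    · exact hfi

end CutVertex

section OnePointUnion

variable {W ι : Type} {w₀ : W}

open Classical in
noncomputable def Wedge.incl (w₀ : W) (c : ι) (w : W) : Option (ι × {w // w ≠ w₀}) :=
  if hw : w = w₀ then none else some (c, ⟨w, hw⟩)

def Wedge.proj : Option (ι × {w // w ≠ w₀}) → W
  | none => w₀
  | some p => p.2

def Wedge.SameCopy (x y : Option (ι × {w // w ≠ w₀})) : Prop :=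
  x = none ∨ y = none ∨ x.map Prod.fst = y.map Prod.fst

/-- The one-point union of `ι` copies of `R` glued at `w₀`: `none` is the glued vertex and
`some (c, w)` is the vertex `w` of copy `c`. -/
def wedge (R : W → W → Prop) (w₀ : W) (ι : Type) (x y : Option (ι × {w // w ≠ w₀})) : Prop :=
  R (Wedge.proj x) (Wedge.proj y) ∧ Wedge.SameCopy x y

namespace Wedge

@[simp]
lemma proj_incl (c : ι) (w : W) : proj (incl w₀ c w) = w := by
  unfold incl; split_ifs with hw
  · exact hw.symm
  · rfl

lemma incl_injective (c : ι) : (incl w₀ c).Injective :=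
  Function.LeftInverse.injective (proj_incl c)

lemma exists_incl_proj_eq [Nonempty ι] (x : Option (ι × {w // w ≠ w₀})) :
    ∃ c, incl w₀ c (proj x) = x := by
  rcases x with _ | ⟨c, w, hw⟩
  · exact ⟨Classical.arbitrary ι, by simp [incl, proj]⟩
  · exact ⟨c, by simp [incl, proj, hw]⟩

lemma sameCopy_incl (c : ι) (a b : W) : SameCopy (incl w₀ c a) (incl w₀ c b) := by
  unfold SameCopy incl; split_ifs <;> simp

lemma eq_of_sameCopy_of_proj_eq {x y : Option (ι × {w // w ≠ w₀})} (hxy : SameCopy x y)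
    (hproj : proj x = proj y) : x = y := by
  rcases x with _ | ⟨c, w, hw⟩ <;> rcases y with _ | ⟨c', w', hw'⟩
  · rfl
  · exact absurd hproj.symm hw'
  · exact absurd hproj hw
  · simp only [SameCopy, reduceCtorEq, Option.map_some, Option.some.injEq, false_or] at hxy
    simp only [proj] at hproj
    subst hxy hproj
    rfl

end Wedge

open Wedge

variable {R : W → W → Prop}

lemma IsOriented.wedge (hR : IsOriented R) (w₀ : W) (ι : Type) : IsOriented (wedge R w₀ ι) :=
  hR.of_hom proj fun _ _ h => h.1

lemma wedge_incl (c : ι) {a b : W} (h : R a b) : wedge R w₀ ι (incl w₀ c a) (incl w₀ c b) :=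
  ⟨by simpa using h, sameCopy_incl c a b⟩

lemma outDeg_le_outDeg_wedge [Finite W] [Finite ι] [Nonempty ι]
    (x : Option (ι × {w // w ≠ w₀})) :
    OutDeg R (proj x) ≤ OutDeg (wedge R w₀ ι) x := by
  obtain ⟨c, hc⟩ := exists_incl_proj_eq x
  calc OutDeg R (proj x) ≤ OutDeg (wedge R w₀ ι) (incl w₀ c (proj x)) :=
        outDeg_le_of_hom (incl_injective c) (fun _ _ => wedge_incl c) _
    _ = OutDeg (wedge R w₀ ι) x := by rw [hc]

lemma inDeg_le_inDeg_wedge [Finite W] [Finite ι] [Nonempty ι]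
    (x : Option (ι × {w // w ≠ w₀})) :
    InDeg R (proj x) ≤ InDeg (wedge R w₀ ι) x := by
  obtain ⟨c, hc⟩ := exists_incl_proj_eq x
  calc InDeg R (proj x) ≤ InDeg (wedge R w₀ ι) (incl w₀ c (proj x)) :=
        inDeg_le_of_hom (incl_injective c) (fun _ _ => wedge_incl c) _
    _ = InDeg (wedge R w₀ ι) x := by rw [hc]

/-- The glued vertex is a cut vertex, so a directed cycle of the wedge stays in one copy, where
the projection is injective. -/
lemma HasDirCycle.of_wedge {s : ℕ} (h : HasDirCycle (wedge R w₀ ι) s) : HasDirCycle R s := by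
  obtain ⟨hs, f, hclosed, hedge, hinj⟩ := h
  have hcopy : ∀ u v, wedge R w₀ ι u v → u ≠ none → v ≠ none →
      u.map Prod.fst = v.map Prod.fst := fun u v huv hu hv =>
    (huv.2.resolve_left hu).resolve_left hv
  refine ⟨hs, proj ∘ f, congrArg proj hclosed, fun i hi => (hedge i hi).1, ?_⟩
  intro i hi j hj hij
  refine hinj hi hj (eq_of_sameCopy_of_proj_eq ?_ hij)
  by_cases hfi : f i = none
  · exact Or.inl hfi
  by_cases hfj : f j = none
  · exact Or.inr (Or.inl hfj)
  exact Or.inr (Or.inr (apply_eq_apply_of_cycle hcopy hclosed hedge hinj hi hj hfi hfj))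

end OnePointUnion

section Circulant

def circulantTournament (m : ℕ) (a b : ZMod (2 * m + 1)) : Prop :=
  (b - a).val ∈ Set.Icc 1 m

variable (m : ℕ)

lemma isOriented_circulantTournament : IsOriented (circulantTournament m) := by
  refine ⟨fun a h => by simp [circulantTournament] at h, fun a b hab hba => ?_⟩
  have hne : b - a ≠ 0 := by
    rintro h0
    simp [circulantTournament, h0] at hab
  have hneg : (a - b).val = 2 * m + 1 - (b - a).val := by
    rw [← neg_sub, ZMod.neg_val, if_neg hne]
  simp only [circulantTournament, Set.mem_Icc] at hab hba
  omega

lemma ncard_setOf_val_mem_Icc :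
    {d : ZMod (2 * m + 1) | d.val ∈ Set.Icc 1 m}.ncard = m := by
  have hlt : ∀ r ∈ Set.Icc 1 m, r < 2 * m + 1 := fun r hr => by simp at hr; omega
  have himage : {d : ZMod (2 * m + 1) | d.val ∈ Set.Icc 1 m} = Nat.cast '' Set.Icc 1 m := by
    ext d
    constructor
    · exact fun hd => ⟨d.val, hd, ZMod.natCast_zmod_val d⟩
    · rintro ⟨r, hr, rfl⟩
      rwa [Set.mem_ofPred_eq, ZMod.val_cast_of_lt (hlt r hr)]
  rw [himage, Set.InjOn.ncard_image, Set.ncard_Icc_nat, Nat.add_sub_cancel]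
  intro r hr r' hr' h
  simpa [ZMod.val_cast_of_lt (hlt r hr), ZMod.val_cast_of_lt (hlt r' hr')] using
    congrArg ZMod.val h

lemma outDeg_circulantTournament (a : ZMod (2 * m + 1)) :
    OutDeg (circulantTournament m) a = m := by
  have : {b | circulantTournament m a b} = (· + a) '' {d | d.val ∈ Set.Icc 1 m} := by
    ext b
    constructor
    · exact fun hb => ⟨b - a, hb, sub_add_cancel b a⟩
    · rintro ⟨d, hd, rfl⟩
      simpa [circulantTournament] using hd
  rw [OutDeg, this, Set.ncard_image_of_injective _ (add_left_injective a),
    ncard_setOf_val_mem_Icc]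

lemma inDeg_circulantTournament (a : ZMod (2 * m + 1)) :
    InDeg (circulantTournament m) a = m := by
  have : {b | circulantTournament m b a} = (a - ·) '' {d | d.val ∈ Set.Icc 1 m} := by
    ext b
    constructor
    · exact fun hb => ⟨a - b, hb, sub_sub_cancel a b⟩
    · rintro ⟨d, hd, rfl⟩
      simpa [circulantTournament] using hd
  rw [InDeg, this, Set.ncard_image_of_injective _ (sub_right_injective), ncard_setOf_val_mem_Icc]

end Circulant

theorem exists_wedge_circulantTournament_on_fin (q m : ℕ) (hq : 0 < q) :
    ∃ E : Fin (q * (2 * m) + 1) → Fin (q * (2 * m) + 1) → Prop, IsOriented E ∧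
      (∀ v, m ≤ OutDeg E v ∧ m ≤ InDeg E v) ∧ ∀ s, HasDirCycle E s → s ≤ 2 * m + 1 := by
  have : Nonempty (Fin q) := ⟨⟨0, hq⟩⟩
  let G := wedge (circulantTournament m) 0 (Fin q)
  let e : Fin (q * (2 * m) + 1) ≃ Option (Fin q × {w : ZMod (2 * m + 1) // w ≠ 0}) :=
    Fintype.equivOfCardEq (by simp)
  refine ⟨fun u v => G (e u) (e v),
    ((isOriented_circulantTournament m).wedge 0 (Fin q)).of_hom e fun _ _ h => h,
    fun v => ⟨?_, ?_⟩, fun s hs => ?_⟩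
  · rw [outDeg_comap_equiv]
    exact (outDeg_circulantTournament m _).ge.trans (outDeg_le_outDeg_wedge (e v))
  · rw [inDeg_comap_equiv]
    exact (inDeg_circulantTournament m _).ge.trans (inDeg_le_inDeg_wedge (e v))
  · simpa using ((hs.of_hom e.injective fun _ _ h => h).of_wedge).le_card

theorem stmt_14_general (l k : ℕ) (hl4 : 4 < l) (hleven : Even l) (hk2 : 2 < k) :
    ∃ E : Fin ((k - 1) / 2 * (l - 2) + 1) → Fin ((k - 1) / 2 * (l - 2) + 1) → Prop,
      IsOriented E ∧
      (∀ v, ((k - 1) / 2 * (l - 2) + 1) / k + 1 ≤ OutDeg E v ∧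
            ((k - 1) / 2 * (l - 2) + 1) / k + 1 ≤ InDeg E v) ∧
      ∀ s : ℕ, HasDirCycle E s → s ≤ l - 1 := by
  obtain ⟨m, hm, hm2⟩ : ∃ m, l - 2 = 2 * m ∧ 2 ≤ m := by
    obtain ⟨r, hr⟩ := hleven
    exact ⟨r - 1, by omega, by omega⟩
  rw [hm]
  obtain ⟨E, hE, hdeg, hcyc⟩ :=
    exists_wedge_circulantTournament_on_fin ((k - 1) / 2) m (by omega)
  have hdiv : ((k - 1) / 2 * (2 * m) + 1) / k < m := by
    have hq : 2 * ((k - 1) / 2) + 1 ≤ k := by omega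
    exact Nat.div_lt_of_lt_mul (by nlinarith)
  refine ⟨E, hE, fun v => ⟨?_, ?_⟩, fun s hs => ?_⟩
  · exact hdiv.trans_le (hdeg v).1
  · exact hdiv.trans_le (hdeg v).2
  · have := hcyc s hs
    omega

/-- Proposition 2.11: for even `ℓ > 4` and `k > 2` minimal not dividing `ℓ`, there is an
oriented graph on `n = ⌊(k−1)/2⌋(ℓ−2) + 1` vertices with minimum semidegree at least
`⌊n/k⌋ + 1` containing no directed cycle of length greater than `ℓ − 1`. -/
theorem stmt_14 (l k : ℕ) (hl4 : 4 < l) (hleven : Even l)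
    (hk2 : 2 < k) (hknd : ¬ k ∣ l) (hmin : ∀ m : ℕ, 2 < m → m < k → m ∣ l) :
    ∃ E : Fin ((k - 1) / 2 * (l - 2) + 1) → Fin ((k - 1) / 2 * (l - 2) + 1) → Prop,
      IsOriented E ∧
      (∀ v, ((k - 1) / 2 * (l - 2) + 1) / k + 1 ≤ OutDeg E v ∧
            ((k - 1) / 2 * (l - 2) + 1) / k + 1 ≤ InDeg E v) ∧
      ∀ s : ℕ, HasDirCycle E s → s ≤ l - 1 :=
  stmt_14_general l k hl4 hleven hk2
end
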